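/- For n ≥ 2 and any two smooth n-loops a, b in X, the concatenations a ⋆ b and b ⋆ a are rank-n homotopic; consequently the group π_n^n(X,*) of rank-n homotopy classes of smooth n-loops under concatenation is abelian. -/

import Mathlib

/-!
Eckmann–Hilton, carried out by a reparametrization of the cube. The homotopy is
`K s = ab ∘ M s` for a smooth family `M s : ℝⁿ → [0,1]ⁿ` that only moves the first two
coordinates `(u, v)` (then clamped coordinatewise into the cube). Read in the picture of `K s`,
during `s ∈ [1/8, 1/4]` the `a`-half is squeezed into the top of its column and the `b`-half into
the bottom; during `s ∈ [3/8, 1/2]` the top row slides right by `1/2` and the bottom row left by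
`1/2`; during `s ∈ [5/8, 3/4]` both are stretched back, giving `ba`. The rows need a second
coordinate, hence `n ≥ 2`. Throughout, `M s` sends the collar of the cube near the edges of the
two halves, where `ab` is constant, so `K` is based; and since `K` factors through the
`n`-dimensional cube, its differential has rank at most `n`.
-/

open scoped Manifold

noncomputable section

/-- A smooth `n`-loop in a manifold `X` based at `x₀`: a map `[0,1]ⁿ → X` which is smooth
in the sense that it extends to a `C^∞` map on an open neighbourhood of the cube, and which
equals `x₀` whenever some coordinate lies in `[0,ε) ∪ (1-ε,1]`. -/
structure SmoothNLoop {E HM : Type*} [NormedAddCommGroup E] [NormedSpace ℝ E]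
    [TopologicalSpace HM] (IM : ModelWithCorners ℝ E HM)
    (X : Type*) [TopologicalSpace X] [ChartedSpace HM X] (n : ℕ) (x₀ : X) : Type _ where
  toFun : (Fin n → ℝ) → X
  smooth : ∃ U : Set (Fin n → ℝ), IsOpen U ∧ Set.Icc 0 1 ⊆ U ∧
      ContMDiffOn 𝓘(ℝ, Fin n → ℝ) IM (⊤ : ℕ∞) toFun U
  based : ∃ ε : ℝ, 0 < ε ∧ ∀ t ∈ Set.Icc (0 : Fin n → ℝ) 1,
      (∃ i, t i < ε ∨ 1 - ε < t i) → toFun t = x₀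

/-- Rank-`n` (thin) homotopy of smooth `n`-loops: a homotopy `K : [0,1] × [0,1]ⁿ → X`,
smooth on an open neighbourhood of its domain, which is based (condition 1), starts at `ℓ₁`
(condition 2), ends at `ℓ₂` (condition 3), and whose total differential has rank `≤ n`
throughout its domain (condition 4). -/
def ThinHomotopic {E HM : Type*} [NormedAddCommGroup E] [NormedSpace ℝ E]
    [TopologicalSpace HM] {IM : ModelWithCorners ℝ E HM}
    {X : Type*} [TopologicalSpace X] [ChartedSpace HM X] {n : ℕ} {x₀ : X}
    (ℓ₁ ℓ₂ : SmoothNLoop IM X n x₀) : Prop :=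
  ∃ (K : ℝ × (Fin n → ℝ) → X) (ε : ℝ), 0 < ε ∧
    (∃ U : Set (ℝ × (Fin n → ℝ)), IsOpen U ∧
        Set.Icc (0 : ℝ) 1 ×ˢ Set.Icc (0 : Fin n → ℝ) 1 ⊆ U ∧
        ContMDiffOn 𝓘(ℝ, ℝ × (Fin n → ℝ)) IM (⊤ : ℕ∞) K U) ∧
    (∀ s ∈ Set.Icc (0 : ℝ) 1, ∀ t ∈ Set.Icc (0 : Fin n → ℝ) 1,
        (∃ i, t i < ε ∨ 1 - ε < t i) → K (s, t) = x₀) ∧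
    (∀ s ∈ Set.Icc (0 : ℝ) 1, ∀ t ∈ Set.Icc (0 : Fin n → ℝ) 1,
        s < ε → K (s, t) = ℓ₁.toFun t) ∧
    (∀ s ∈ Set.Icc (0 : ℝ) 1, ∀ t ∈ Set.Icc (0 : Fin n → ℝ) 1,
        1 - ε < s → K (s, t) = ℓ₂.toFun t) ∧
    (∀ p ∈ Set.Icc (0 : ℝ) 1 ×ˢ Set.Icc (0 : Fin n → ℝ) 1,
        LinearMap.rank (mfderiv 𝓘(ℝ, ℝ × (Fin n → ℝ)) IM K p).toLinearMap ≤ (n : Cardinal))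

def Cube (n : ℕ) : Set (Fin n → ℝ) := Set.Icc 0 1

def concatFun {X : Type*} {n : ℕ} (hn : 0 < n) (f g : (Fin n → ℝ) → X) :
    (Fin n → ℝ) → X := fun t =>
  if t ⟨0, hn⟩ ≤ 1 / 2 then f (Function.update t ⟨0, hn⟩ (2 * t ⟨0, hn⟩))
  else g (Function.update t ⟨0, hn⟩ (2 * t ⟨0, hn⟩ - 1))

namespace EckmannHilton

open Real Function Set
open scoped ContDiff

section Smoothstep

variable {a b : ℝ}

theorem smoothTransition_div_eq_zero (hb : 0 < b) (h : a ≤ 0) : smoothTransition (a / b) = 0 :=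
  smoothTransition.zero_of_nonpos (div_nonpos_of_nonpos_of_nonneg h hb.le)

theorem smoothTransition_div_eq_one (hb : 0 < b) (h : b ≤ a) : smoothTransition (a / b) = 1 :=
  smoothTransition.one_of_one_le ((le_div_iff₀ hb).2 (by linarith))

end Smoothstep

def NearEdge (δ x : ℝ) : Prop := x ≤ δ ∨ 1 - δ ≤ x

def NearSeam (δ u v : ℝ) : Prop := NearEdge δ u ∨ (1/2 - δ ≤ u ∧ u ≤ 1/2 + δ) ∨ NearEdge δ v

theorem NearSeam.of_fst {δ u v : ℝ} (h : NearEdge δ u) : NearSeam δ u v := Or.inl h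

theorem NearSeam.of_mid {δ u v : ℝ} (h₁ : 1/2 - δ ≤ u) (h₂ : u ≤ 1/2 + δ) : NearSeam δ u v :=
  Or.inr (Or.inl ⟨h₁, h₂⟩)

theorem NearSeam.of_snd {δ u v : ℝ} (h : NearEdge δ v) : NearSeam δ u v := Or.inr (Or.inr h)

theorem NearEdge.mono {δ δ' x : ℝ} (h : NearEdge δ x) (hδ : δ ≤ δ') : NearEdge δ' x := by
  rcases h with h | h
  exacts [Or.inl (by linarith), Or.inr (by linarith)]

section Clamp

variable {ε x : ℝ}

def clamp (ε x : ℝ) : ℝ :=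
  x + (ε - x) * (1 - smoothTransition (x / ε)) +
    (1 - ε - x) * smoothTransition ((x - (1 - ε)) / ε)

theorem clamp_eq_self (hε : 0 < ε) (h₁ : ε ≤ x) (h₂ : x ≤ 1 - ε) : clamp ε x = x := by
  simp only [clamp, smoothTransition_div_eq_one hε h₁,
    smoothTransition_div_eq_zero hε (show x - (1 - ε) ≤ 0 by linarith)]
  ring

theorem clamp_mem_Icc_of_le (hε : 0 < ε) (hε₂ : ε ≤ 1/2) (h : x ≤ ε) :
    clamp ε x ∈ Icc 0 ε := by
  have h₁ := smoothTransition.nonneg (x / ε)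
  have h₂ := smoothTransition.le_one (x / ε)
  simp only [clamp, smoothTransition_div_eq_zero hε (show x - (1 - ε) ≤ 0 by linarith)]
  rcases le_or_gt x 0 with hx | hx
  · rw [smoothTransition_div_eq_zero hε hx]
    constructor <;> linarith
  · constructor <;> nlinarith

theorem clamp_mem_Icc_of_ge (hε : 0 < ε) (hε₂ : ε ≤ 1/2) (h : 1 - ε ≤ x) :
    clamp ε x ∈ Icc (1 - ε) 1 := by
  have h₁ := smoothTransition.nonneg ((x - (1 - ε)) / ε)
  have h₂ := smoothTransition.le_one ((x - (1 - ε)) / ε)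
  simp only [clamp, smoothTransition_div_eq_one hε (show ε ≤ x by linarith)]
  rcases le_or_gt x 1 with hx | hx
  · constructor <;> nlinarith
  · rw [smoothTransition_div_eq_one hε (show ε ≤ x - (1 - ε) by linarith)]
    constructor <;> linarith

theorem clamp_mem_Icc (hε : 0 < ε) (hε₂ : ε ≤ 1/2) (x : ℝ) : clamp ε x ∈ Icc 0 1 := by
  rcases le_or_gt x ε with h₁ | h₁
  · exact Icc_subset_Icc le_rfl (by linarith) (clamp_mem_Icc_of_le hε hε₂ h₁)
  rcases le_or_gt x (1 - ε) with h₂ | h₂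
  · rw [clamp_eq_self hε h₁.le h₂]
    constructor <;> linarith
  · exact Icc_subset_Icc (by linarith) le_rfl (clamp_mem_Icc_of_ge hε hε₂ h₂.le)

theorem nearEdge_clamp {δ : ℝ} (hε : 0 < ε) (hεδ : ε ≤ δ) (hδ : δ ≤ 1/2) (h : NearEdge δ x) :
    NearEdge δ (clamp ε x) := by
  rcases le_or_gt x ε with h₁ | h₁
  · exact Or.inl ((clamp_mem_Icc_of_le hε (by linarith) h₁).2.trans hεδ)
  rcases le_or_gt x (1 - ε) with h₂ | h₂
  · rwa [clamp_eq_self hε h₁.le h₂]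
  · exact Or.inr (by linarith [(clamp_mem_Icc_of_ge hε (by linarith) h₂.le).1])

theorem contDiff_clamp {F : Type*} [NormedAddCommGroup F] [NormedSpace ℝ F] {f : F → ℝ}
    (hf : ContDiff ℝ ∞ f) : ContDiff ℝ ∞ fun y => clamp ε (f y) := by
  unfold clamp
  simp only [div_eq_mul_inv]
  fun_prop

end Clamp

section Stages

variable {ε s u v w : ℝ}

def phase (c s : ℝ) : ℝ := smoothTransition (8 * s - c)

def side (ε u : ℝ) : ℝ := smoothTransition ((u - (1/2 - ε)) / (2 * ε))

def rowSign (ε w : ℝ) : ℝ := 2 * smoothTransition ((w - (1/2 - ε/2)) / ε) - 1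

def bump (ε u : ℝ) : ℝ :=
  smoothTransition ((u - ε/2) / (ε/2)) * (1 - smoothTransition ((u - (1 - ε)) / (ε/2)))

def capTop (ε v : ℝ) : ℝ := v + (1 - 3/2 * ε - v) * smoothTransition ((v - (1 - 2 * ε)) / ε)

def squeeze (ε u w : ℝ) : ℝ := (1 - side ε u) * clamp ε (2 * w - 1) + side ε u * clamp ε (2 * w)

/- The three stages of the header, composed in reverse order because `K s = ab ∘ M s`:
`lift` is the last one (`phase 5`), `swapFst` the sliding (`phase 3`) and the `squeeze` in
`swapSnd` the first (`phase 1`). `capTop` keeps `lift` strictly below `1/2` on the left half, so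
that `rowSign` is `-1` there at the end. -/
def lift (ε s u v : ℝ) : ℝ := (1 - phase 5 s) * v + phase 5 s * ((capTop ε v + side ε u) / 2)

def swapFst (ε s u v : ℝ) : ℝ := u - phase 3 s / 2 * rowSign ε (lift ε s u v) * bump ε u

def swapSnd (ε s u v : ℝ) : ℝ :=
  (1 - phase 1 s) * lift ε s u v + phase 1 s * squeeze ε (swapFst ε s u v) (lift ε s u v)

theorem phase_eq_zero {c : ℝ} (h : 8 * s ≤ c) : phase c s = 0 :=
  smoothTransition.zero_of_nonpos (by linarith)

theorem phase_eq_one {c : ℝ} (h : c + 1 ≤ 8 * s) : phase c s = 1 :=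
  smoothTransition.one_of_one_le (by linarith)

theorem phase_nonneg (c s : ℝ) : 0 ≤ phase c s := smoothTransition.nonneg _

theorem phase_le_one (c s : ℝ) : phase c s ≤ 1 := smoothTransition.le_one _

theorem phase_five_eq_zero_or (s : ℝ) : phase 5 s = 0 ∨ phase 1 s = 1 ∧ phase 3 s = 1 := by
  rcases le_or_gt (8 * s) 5 with h | h
  · exact Or.inl (phase_eq_zero h)
  · exact Or.inr ⟨phase_eq_one (by linarith), phase_eq_one (by linarith)⟩

theorem side_eq_zero (hε : 0 < ε) (h : u ≤ 1/2 - ε) : side ε u = 0 :=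
  smoothTransition_div_eq_zero (by linarith) (by linarith)

theorem side_eq_one (hε : 0 < ε) (h : 1/2 + ε ≤ u) : side ε u = 1 :=
  smoothTransition_div_eq_one (by linarith) (by linarith)

theorem side_nonneg (ε u : ℝ) : 0 ≤ side ε u := smoothTransition.nonneg _

theorem side_le_one (ε u : ℝ) : side ε u ≤ 1 := smoothTransition.le_one _

theorem rowSign_eq_neg_one (hε : 0 < ε) (h : w ≤ 1/2 - ε/2) : rowSign ε w = -1 := by
  rw [rowSign, smoothTransition_div_eq_zero hε (by linarith)]
  ring

theorem rowSign_eq_one (hε : 0 < ε) (h : 1/2 + ε/2 ≤ w) : rowSign ε w = 1 := by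
  rw [rowSign, smoothTransition_div_eq_one hε (by linarith)]
  ring

theorem abs_rowSign_le (ε w : ℝ) : |rowSign ε w| ≤ 1 := by
  have h₁ := smoothTransition.nonneg ((w - (1/2 - ε/2)) / ε)
  have h₂ := smoothTransition.le_one ((w - (1/2 - ε/2)) / ε)
  rw [abs_le, rowSign]
  constructor <;> linarith

theorem bump_eq_zero (hε : 0 < ε) (h : NearEdge (ε/2) u) : bump ε u = 0 := by
  rcases h with h | h
  · rw [bump, smoothTransition_div_eq_zero (by linarith) (by linarith), zero_mul]
  · rw [bump, smoothTransition_div_eq_one (a := u - (1 - ε)) (by linarith) (by linarith), sub_self,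
      mul_zero]

theorem bump_eq_one (hε : 0 < ε) (h₁ : ε ≤ u) (h₂ : u ≤ 1 - ε) : bump ε u = 1 := by
  rw [bump, smoothTransition_div_eq_one (by linarith) (by linarith),
    smoothTransition_div_eq_zero (by linarith) (by linarith)]
  ring

theorem bump_nonneg (ε u : ℝ) : 0 ≤ bump ε u :=
  mul_nonneg (smoothTransition.nonneg _) (sub_nonneg.2 (smoothTransition.le_one _))

theorem bump_le_one (ε u : ℝ) : bump ε u ≤ 1 :=
  mul_le_one₀ (smoothTransition.le_one _) (sub_nonneg.2 (smoothTransition.le_one _))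
    (by linarith [smoothTransition.nonneg ((u - (1 - ε)) / (ε/2))])

theorem capTop_eq_self (hε : 0 < ε) (h : v ≤ 1 - 2 * ε) : capTop ε v = v := by
  rw [capTop, smoothTransition_div_eq_zero hε (by linarith)]
  ring

theorem capTop_mem_Icc_of_ge (hε : 0 < ε) (h₁ : 1 - 2 * ε ≤ v) :
    capTop ε v ∈ Icc (1 - 2 * ε) (1 - ε) := by
  have hτ₀ := smoothTransition.nonneg ((v - (1 - 2 * ε)) / ε)
  have hτ₁ := smoothTransition.le_one ((v - (1 - 2 * ε)) / ε)
  rcases le_or_gt v (1 - ε) with h₃ | h₃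
  · constructor <;> (simp only [capTop]; nlinarith)
  · rw [capTop, smoothTransition_div_eq_one hε (by linarith)]
    constructor <;> linarith

theorem capTop_le (hε : 0 < ε) (v : ℝ) : capTop ε v ≤ 1 - ε := by
  rcases le_or_gt v (1 - 2 * ε) with h | h
  · rw [capTop_eq_self hε h]
    linarith
  · exact (capTop_mem_Icc_of_ge hε h.le).2

theorem capTop_nonneg (hε : 0 < ε) (hε₂ : ε ≤ 1/2) (h₀ : 0 ≤ v) : 0 ≤ capTop ε v := by
  rcases le_or_gt v (1 - 2 * ε) with h | h
  · rwa [capTop_eq_self hε h]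
  · linarith [(capTop_mem_Icc_of_ge hε h.le).1]

end Stages

section Swap

variable {ε s u v δ : ℝ}

theorem lift_of_phase_five_eq_zero (h : phase 5 s = 0) : lift ε s u v = v := by
  rw [lift, h]
  ring

theorem lift_of_three_quarters_le (hs : 3/4 ≤ s) :
    lift ε s u v = (capTop ε v + side ε u) / 2 := by
  rw [lift, phase_eq_one (by linarith)]
  ring

theorem swap_eq_self_of_le (hs : s ≤ 1/8) : swapFst ε s u v = u ∧ swapSnd ε s u v = v := by
  have h₁ : phase 1 s = 0 := phase_eq_zero (by linarith)
  have h₃ : phase 3 s = 0 := phase_eq_zero (by linarith)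
  constructor
  · rw [swapFst, h₃]
    ring
  · rw [swapSnd, lift_of_phase_five_eq_zero (phase_eq_zero (by linarith)), h₁]
    ring

theorem swapFst_of_nearEdge (hε : 0 < ε) (h : NearEdge (ε/2) u) : swapFst ε s u v = u := by
  rw [swapFst, bump_eq_zero hε h]
  ring

theorem abs_swapFst_sub_le (ε s u v : ℝ) : |swapFst ε s u v - u| ≤ 1/2 := by
  rw [swapFst, sub_sub_cancel_left, abs_neg, abs_mul, abs_mul, abs_div,
    abs_of_nonneg (phase_nonneg 3 s), abs_of_nonneg (bump_nonneg ε u), abs_two]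
  have h : |rowSign ε (lift ε s u v)| * bump ε u ≤ 1 :=
    mul_le_one₀ (abs_rowSign_le _ _) (bump_nonneg ε u) (bump_le_one ε u)
  nlinarith [phase_le_one 3 s, mul_le_mul_of_nonneg_left h (phase_nonneg 3 s)]

theorem swapFst_eq_add (hε : 0 < ε) (h₃ : phase 3 s = 1) (hw : lift ε s u v ≤ 1/2 - ε/2) :
    swapFst ε s u v = u + bump ε u / 2 := by
  rw [swapFst, h₃, rowSign_eq_neg_one hε hw]
  ring

theorem swapFst_eq_sub (hε : 0 < ε) (h₃ : phase 3 s = 1) (hw : 1/2 + ε/2 ≤ lift ε s u v) :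
    swapFst ε s u v = u - bump ε u / 2 := by
  rw [swapFst, h₃, rowSign_eq_one hε hw]
  ring

theorem one_sub_le_swapFst (hε : 0 < ε) (hε₁ : ε ≤ 1/4) (h₃ : phase 3 s = 1)
    (hw : lift ε s u v ≤ 1/2 - ε/2) (hu : 1/2 - ε ≤ u) : 1 - ε ≤ swapFst ε s u v := by
  rw [swapFst_eq_add hε h₃ hw]
  rcases le_or_gt u (1 - ε) with hu' | hu'
  · rw [bump_eq_one hε (by linarith) hu']
    linarith
  · linarith [bump_nonneg ε u]

theorem swapFst_le (hε : 0 < ε) (hε₁ : ε ≤ 1/4) (h₃ : phase 3 s = 1)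
    (hw : 1/2 + ε/2 ≤ lift ε s u v) (hu : u ≤ 1/2 + ε) : swapFst ε s u v ≤ ε := by
  rw [swapFst_eq_sub hε h₃ hw]
  rcases le_or_gt ε u with hu' | hu'
  · rw [bump_eq_one hε hu' (by linarith)]
    linarith
  · linarith [bump_nonneg ε u]

theorem squeeze_of_le (hε : 0 < ε) {w : ℝ} (h : u ≤ 1/2 - ε) :
    squeeze ε u w = clamp ε (2 * w - 1) := by
  rw [squeeze, side_eq_zero hε h]
  ring

theorem squeeze_of_ge (hε : 0 < ε) {w : ℝ} (h : 1/2 + ε ≤ u) : squeeze ε u w = clamp ε (2 * w) := by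
  rw [squeeze, side_eq_one hε h]
  ring

theorem swapSnd_eq_squeeze (h₁ : phase 1 s = 1) :
    swapSnd ε s u v = squeeze ε (swapFst ε s u v) (lift ε s u v) := by
  rw [swapSnd, h₁]
  ring

theorem swapSnd_le (hw : lift ε s u v ≤ δ) (hA : clamp ε (2 * lift ε s u v - 1) ≤ δ)
    (hB : clamp ε (2 * lift ε s u v) ≤ δ) : swapSnd ε s u v ≤ δ := by
  have hside₀ := side_nonneg ε (swapFst ε s u v)
  have hside₁ := side_le_one ε (swapFst ε s u v)
  have hsq : squeeze ε (swapFst ε s u v) (lift ε s u v) ≤ δ := by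
    simp only [squeeze]
    nlinarith
  simp only [swapSnd]
  nlinarith [phase_nonneg 1 s, phase_le_one 1 s]

theorem le_swapSnd (hw : δ ≤ lift ε s u v) (hA : δ ≤ clamp ε (2 * lift ε s u v - 1))
    (hB : δ ≤ clamp ε (2 * lift ε s u v)) : δ ≤ swapSnd ε s u v := by
  have hside₀ := side_nonneg ε (swapFst ε s u v)
  have hside₁ := side_le_one ε (swapFst ε s u v)
  have hsq : δ ≤ squeeze ε (swapFst ε s u v) (lift ε s u v) := by
    simp only [squeeze]
    nlinarith
  simp only [swapSnd]
  nlinarith [phase_nonneg 1 s, phase_le_one 1 s]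

theorem nearSeam_swap_of_squeeze (hε : 0 < ε) (h₁ : phase 1 s = 1)
    (hA : swapFst ε s u v ≤ 1/2 - ε → NearEdge (2 * ε) (clamp ε (2 * lift ε s u v - 1)))
    (hB : 1/2 + ε ≤ swapFst ε s u v → NearEdge (2 * ε) (clamp ε (2 * lift ε s u v))) :
    NearSeam (2 * ε) (swapFst ε s u v) (swapSnd ε s u v) := by
  rw [swapSnd_eq_squeeze h₁]
  rcases le_or_gt (swapFst ε s u v) (1/2 - ε) with h | h
  · exact .of_snd (by rw [squeeze_of_le hε h]; exact hA h)
  rcases le_or_gt (1/2 + ε) (swapFst ε s u v) with h' | h'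
  · exact .of_snd (by rw [squeeze_of_ge hε h']; exact hB h')
  · exact .of_mid (by linarith) (by linarith)

end Swap

section Collar

variable {ε s u v : ℝ}

theorem nearSeam_swap_of_snd_le (hε : 0 < ε) (hε₁ : ε ≤ 1/16) (hv : v ≤ ε/2) :
    NearSeam (2 * ε) (swapFst ε s u v) (swapSnd ε s u v) := by
  have hclamp {x : ℝ} (hx : x ≤ ε) : clamp ε x ≤ ε := (clamp_mem_Icc_of_le hε (by linarith) hx).2
  rcases phase_five_eq_zero_or s with h₅ | ⟨h₁, h₃⟩
  · have hw := lift_of_phase_five_eq_zero (ε := ε) (u := u) (v := v) h₅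
    refine .of_snd (Or.inl (swapSnd_le ?_ ?_ ?_)) <;> rw [hw]
    exacts [by linarith, (hclamp (by linarith)).trans (by linarith),
      (hclamp (by linarith)).trans (by linarith)]
  have hw : lift ε s u v = (1 - phase 5 s) * v + phase 5 s * ((v + side ε u) / 2) := by
    rw [lift, capTop_eq_self hε (by linarith)]
  have hA : NearEdge (2 * ε) (clamp ε (2 * lift ε s u v - 1)) := by
    refine Or.inl ((hclamp ?_).trans (by linarith))
    rw [hw]
    nlinarith [phase_nonneg 5 s, phase_le_one 5 s, side_nonneg ε u, side_le_one ε u]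
  rcases le_or_gt u (1/2 - ε) with hu | hu
  · refine nearSeam_swap_of_squeeze hε h₁ (fun _ => hA) fun _ => Or.inl ?_
    refine (hclamp ?_).trans (by linarith)
    rw [hw, side_eq_zero hε hu]
    nlinarith [phase_nonneg 5 s, phase_le_one 5 s]
  rcases le_or_gt (lift ε s u v) (1/2 - ε/2) with hw' | hw'
  · exact .of_fst (Or.inr (by linarith [one_sub_le_swapFst hε (by linarith) h₃ hw' hu.le]))
  · refine nearSeam_swap_of_squeeze hε h₁ (fun _ => hA) fun _ => Or.inr ?_
    linarith [(clamp_mem_Icc_of_ge hε (by linarith) (show 1 - ε ≤ 2 * lift ε s u v by linarith)).1]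

theorem nearSeam_swap_of_snd_ge (hε : 0 < ε) (hε₁ : ε ≤ 1/16) (hv : 1 - ε/2 ≤ v) :
    NearSeam (2 * ε) (swapFst ε s u v) (swapSnd ε s u v) := by
  have hclamp {x : ℝ} (hx : 1 - ε ≤ x) : 1 - ε ≤ clamp ε x :=
    (clamp_mem_Icc_of_ge hε (by linarith) hx).1
  have hedge {x : ℝ} (hx : 1 - 2 * ε ≤ x) : NearEdge (2 * ε) (clamp ε x) :=
    nearEdge_clamp hε (by linarith) (by linarith) (Or.inr hx)
  rcases phase_five_eq_zero_or s with h₅ | ⟨h₁, h₃⟩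
  · have hw := lift_of_phase_five_eq_zero (ε := ε) (u := u) (v := v) h₅
    refine .of_snd (Or.inr (le_swapSnd ?_ ?_ ?_)) <;> rw [hw]
    exacts [by linarith, (hclamp (by linarith)).trans' (by linarith),
      (hclamp (by linarith)).trans' (by linarith)]
  have hcap := capTop_mem_Icc_of_ge hε (v := v) (by linarith)
  have hw : 1/2 - ε ≤ lift ε s u v := by
    rw [lift]
    nlinarith [phase_nonneg 5 s, phase_le_one 5 s, side_nonneg ε u, hcap.1]
  have hB : 1/2 + ε ≤ swapFst ε s u v → NearEdge (2 * ε) (clamp ε (2 * lift ε s u v)) :=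
    fun _ => hedge (by linarith)
  rcases le_or_gt (1/2 + ε) u with hu | hu
  · refine nearSeam_swap_of_squeeze hε h₁ (fun _ => hedge ?_) hB
    have hw' : 1 - ε ≤ lift ε s u v := by
      rw [lift, side_eq_one hε hu]
      nlinarith [phase_nonneg 5 s, phase_le_one 5 s, hcap.1]
    linarith
  rcases le_or_gt (1/2 + ε/2) (lift ε s u v) with hw' | hw'
  · exact .of_fst (Or.inl (by linarith [swapFst_le hε (by linarith) h₃ hw' hu.le]))
  · refine nearSeam_swap_of_squeeze hε h₁ (fun _ => Or.inl ?_) hB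
    linarith [(clamp_mem_Icc_of_le hε (by linarith) (show 2 * lift ε s u v - 1 ≤ ε by linarith)).2]

end Collar

section Final

variable {ε s u v : ℝ}

def IsHalfSwap (ε u v u' v' : ℝ) : Prop :=
  (0 < u ∧ u ≤ 1/2 ∧ u' = u + 1/2 ∧ v' = v) ∨ (1/2 < u ∧ u' = u - 1/2 ∧ v' = v) ∨
    (NearSeam (2 * ε) u' v' ∧ NearSeam (2 * ε) u v)

theorem IsHalfSwap.of_nearSeam {u' v' : ℝ} (h : NearSeam (2 * ε) u' v')
    (h' : NearSeam (2 * ε) u v) : IsHalfSwap ε u v u' v' :=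
  Or.inr (Or.inr ⟨h, h'⟩)

theorem clamp_capTop_eq_or (hε : 0 < ε) (hε₁ : ε ≤ 1/4) :
    clamp ε (capTop ε v) = v ∨ NearEdge (2 * ε) (clamp ε (capTop ε v)) ∧ NearEdge (2 * ε) v := by
  rcases le_or_gt v (1 - 2 * ε) with h | h
  · rw [capTop_eq_self hε h]
    rcases le_or_gt (2 * ε) v with h' | h'
    · exact Or.inl (clamp_eq_self hε (by linarith) (by linarith))
    · exact Or.inr ⟨nearEdge_clamp hε (by linarith) (by linarith) (Or.inl h'.le), Or.inl h'.le⟩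
  · obtain ⟨h₁, h₂⟩ := capTop_mem_Icc_of_ge hε (v := v) h.le
    rw [clamp_eq_self hε (by linarith) h₂]
    exact Or.inr ⟨Or.inr h₁, Or.inr h.le⟩

theorem isHalfSwap_of_le (hε : 0 < ε) (hε₁ : ε ≤ 1/16) (hs : 3/4 ≤ s) (hu : u ≤ 1/2 - ε) :
    IsHalfSwap ε u v (swapFst ε s u v) (swapSnd ε s u v) := by
  have h₁ : phase 1 s = 1 := phase_eq_one (by linarith)
  have h₃ : phase 3 s = 1 := phase_eq_one (by linarith)
  have hcap := capTop_le hε v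
  have hw : lift ε s u v = capTop ε v / 2 := by
    rw [lift_of_three_quarters_le hs, side_eq_zero hε hu, add_zero]
  have hw' : lift ε s u v ≤ 1/2 - ε/2 := by linarith
  rcases le_or_gt ε u with hu' | hu'
  · have hfst : swapFst ε s u v = u + 1/2 := by
      rw [swapFst_eq_add hε h₃ hw', bump_eq_one hε hu' (by linarith)]
    have hsnd : swapSnd ε s u v = clamp ε (capTop ε v) := by
      rw [swapSnd_eq_squeeze h₁, hfst, squeeze_of_ge hε (by linarith), hw,
        mul_div_cancel₀ _ two_ne_zero]
    rcases clamp_capTop_eq_or hε (by linarith) (v := v) with h | ⟨h, h'⟩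
    · exact Or.inl ⟨by linarith, by linarith, hfst, hsnd.trans h⟩
    · exact .of_nearSeam (.of_snd (hsnd ▸ h)) (.of_snd h')
  · refine .of_nearSeam (nearSeam_swap_of_squeeze hε h₁ (fun _ => Or.inl ?_) fun h => ?_)
      (.of_fst (Or.inl (by linarith)))
    · refine (clamp_mem_Icc_of_le hε (by linarith) ?_).2.trans (by linarith)
      linarith
    · linarith [(abs_le.1 (abs_swapFst_sub_le ε s u v)).2]

theorem isHalfSwap_of_ge (hε : 0 < ε) (hε₁ : ε ≤ 1/16) (hs : 3/4 ≤ s) (hv₀ : 0 ≤ v)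
    (hu : 1/2 + ε ≤ u) : IsHalfSwap ε u v (swapFst ε s u v) (swapSnd ε s u v) := by
  have h₁ : phase 1 s = 1 := phase_eq_one (by linarith)
  have h₃ : phase 3 s = 1 := phase_eq_one (by linarith)
  have hcap := capTop_nonneg hε (by linarith) hv₀
  have hw : lift ε s u v = (capTop ε v + 1) / 2 := by
    rw [lift_of_three_quarters_le hs, side_eq_one hε hu]
  have hB : 1/2 + ε ≤ swapFst ε s u v → NearEdge (2 * ε) (clamp ε (2 * lift ε s u v)) := by
    refine fun _ => Or.inr ((clamp_mem_Icc_of_ge hε (by linarith) ?_).1.trans' (by linarith))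
    linarith
  rcases le_or_gt u (1 - ε) with hu' | hu'
  · rcases le_or_gt ε (capTop ε v) with hc | hc
    · have hfst : swapFst ε s u v = u - 1/2 := by
        rw [swapFst_eq_sub hε h₃ (by linarith), bump_eq_one hε (by linarith) hu']
      have hsnd : swapSnd ε s u v = clamp ε (capTop ε v) := by
        rw [swapSnd_eq_squeeze h₁, hfst, squeeze_of_le hε (by linarith), hw]
        ring_nf
      rcases clamp_capTop_eq_or hε (by linarith) (v := v) with h | ⟨h, h'⟩
      · exact Or.inr (Or.inl ⟨by linarith, hfst, hsnd.trans h⟩)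
      · exact .of_nearSeam (.of_snd (hsnd ▸ h)) (.of_snd h')
    · have hv : v < ε := by
        rcases le_or_gt v (1 - 2 * ε) with h | h
        · rwa [capTop_eq_self hε h] at hc
        · linarith [(capTop_mem_Icc_of_ge hε (v := v) h.le).1]
      refine .of_nearSeam (nearSeam_swap_of_squeeze hε h₁ (fun _ => Or.inl ?_) hB)
        (.of_snd (Or.inl (by linarith)))
      refine (clamp_mem_Icc_of_le hε (by linarith) ?_).2.trans (by linarith)
      linarith
  · refine .of_nearSeam (nearSeam_swap_of_squeeze hε h₁ (fun h => ?_) hB)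
      (.of_fst (Or.inr (by linarith)))
    linarith [(abs_le.1 (abs_swapFst_sub_le ε s u v)).1]

theorem isHalfSwap_of_mem_Ioo (hε : 0 < ε) (hε₁ : ε ≤ 1/16) (hs : 3/4 ≤ s)
    (hu₁ : 1/2 - ε < u) (hu₂ : u < 1/2 + ε) :
    IsHalfSwap ε u v (swapFst ε s u v) (swapSnd ε s u v) := by
  have h₃ : phase 3 s = 1 := phase_eq_one (by linarith)
  refine .of_nearSeam ?_ (.of_mid (by linarith) (by linarith))
  rcases le_or_gt (lift ε s u v) (1/2 - ε/2) with hw | hw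
  · exact .of_fst (Or.inr (by linarith [one_sub_le_swapFst hε (by linarith) h₃ hw hu₁.le]))
  rcases le_or_gt (1/2 + ε/2) (lift ε s u v) with hw' | hw'
  · exact .of_fst (Or.inl (by linarith [swapFst_le hε (by linarith) h₃ hw' hu₂.le]))
  refine nearSeam_swap_of_squeeze hε (phase_eq_one (by linarith)) (fun _ => Or.inl ?_)
    fun _ => Or.inr ?_
  · linarith [(clamp_mem_Icc_of_le hε (by linarith) (show 2 * lift ε s u v - 1 ≤ ε by linarith)).2]
  · linarith [(clamp_mem_Icc_of_ge hε (by linarith) (show 1 - ε ≤ 2 * lift ε s u v by linarith)).1]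

theorem isHalfSwap_swap (hε : 0 < ε) (hε₁ : ε ≤ 1/16) (hs : 3/4 ≤ s) (hv₀ : 0 ≤ v) :
    IsHalfSwap ε u v (swapFst ε s u v) (swapSnd ε s u v) := by
  rcases le_or_gt u (1/2 - ε) with hu | hu
  · exact isHalfSwap_of_le hε hε₁ hs hu
  rcases le_or_gt (1/2 + ε) u with hu' | hu'
  · exact isHalfSwap_of_ge hε hε₁ hs hv₀ hu'
  · exact isHalfSwap_of_mem_Ioo hε hε₁ hs hu hu'

end Final

section Cube

variable {X : Type*} {n : ℕ} {x₀ : X} {ε η δ : ℝ}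

theorem update_mem_Icc {q : Fin n → ℝ} (hq : q ∈ Icc 0 1) (i : Fin n) {z : ℝ}
    (hz : z ∈ Icc 0 1) : update q i z ∈ Icc 0 1 := by
  constructor <;> intro k <;> rcases eq_or_ne k i with rfl | hk
  · simpa using hz.1
  · simpa [hk] using hq.1 k
  · simpa using hz.2
  · simpa [hk] using hq.2 k

theorem clamp_mem_cube (hε : 0 < ε) (hε₂ : ε ≤ 1/2) (q : Fin n → ℝ) :
    (fun k => clamp ε (q k)) ∈ Icc (0 : Fin n → ℝ) 1 :=
  ⟨fun k => (clamp_mem_Icc hε hε₂ (q k)).1, fun k => (clamp_mem_Icc hε hε₂ (q k)).2⟩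

def CollarConst (η : ℝ) (x₀ : X) (f : (Fin n → ℝ) → X) : Prop :=
  ∀ t ∈ Icc (0 : Fin n → ℝ) 1, (∃ i, t i < η ∨ 1 - η < t i) → f t = x₀

theorem CollarConst.mono {f : (Fin n → ℝ) → X} (hf : CollarConst η x₀ f) {η' : ℝ} (h : η' ≤ η) :
    CollarConst η' x₀ f :=
  fun t ht ⟨i, hi⟩ => hf t ht ⟨i, hi.imp (fun _ => by linarith) fun _ => by linarith⟩

def NearCubeSeam (i : Fin n) (δ : ℝ) (q : Fin n → ℝ) : Prop :=
  (1/2 - δ ≤ q i ∧ q i ≤ 1/2 + δ) ∨ ∃ k, NearEdge δ (q k)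

theorem NearSeam.nearCubeSeam {i j : Fin n} {q : Fin n → ℝ} (h : NearSeam δ (q i) (q j)) :
    NearCubeSeam i δ q := by
  rcases h with h | h | h
  exacts [Or.inr ⟨i, h⟩, Or.inl h, Or.inr ⟨j, h⟩]

theorem NearCubeSeam.clamp {i : Fin n} {q : Fin n → ℝ} (h : NearCubeSeam i δ q) (hε : 0 < ε)
    (hεδ : ε ≤ δ) (hδ : δ ≤ 1/2 - ε) : NearCubeSeam i δ fun k => clamp ε (q k) := by
  rcases h with ⟨h₁, h₂⟩ | ⟨k, hk⟩
  · rw [NearCubeSeam, clamp_eq_self hε (by linarith) (by linarith)]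
    exact Or.inl ⟨h₁, h₂⟩
  · exact Or.inr ⟨k, nearEdge_clamp hε hεδ (by linarith) hk⟩

/-- On the seam set the concatenation evaluates `f` or `g` inside their collars. -/
theorem concatFun_eq_of_nearCubeSeam (hn : 0 < n) {f g : (Fin n → ℝ) → X}
    (hf : CollarConst η x₀ f) (hg : CollarConst η x₀ g) (hδ₀ : 0 ≤ δ) (hδ : 2 * δ < η)
    {q : Fin n → ℝ} (hq : q ∈ Icc 0 1) (h : NearCubeSeam ⟨0, hn⟩ δ q) :
    concatFun hn f g q = x₀ := by
  have hq₀ : 0 ≤ q ⟨0, hn⟩ := hq.1 _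
  have hq₁ : q ⟨0, hn⟩ ≤ 1 := hq.2 _
  have hcollar (z : ℝ) (hz : z < η ∨ 1 - η < z ∨ ∃ k ≠ ⟨0, hn⟩, NearEdge δ (q k)) :
      ∃ k, update q ⟨0, hn⟩ z k < η ∨ 1 - η < update q ⟨0, hn⟩ z k := by
    rcases hz with hz | hz | ⟨k, hk, hk' | hk'⟩
    · exact ⟨⟨0, hn⟩, Or.inl (by simpa using hz)⟩
    · exact ⟨⟨0, hn⟩, Or.inr (by simpa using hz)⟩
    · exact ⟨k, Or.inl (by simp only [update_apply, hk, if_false]; linarith)⟩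
    · exact ⟨k, Or.inr (by simp only [update_apply, hk, if_false]; linarith)⟩
  have hseam : (1/2 - δ ≤ q ⟨0, hn⟩ ∧ q ⟨0, hn⟩ ≤ 1/2 + δ) ∨ NearEdge δ (q ⟨0, hn⟩) ∨
      ∃ k ≠ ⟨0, hn⟩, NearEdge δ (q k) := by
    rcases h with h | ⟨k, hk⟩
    · exact Or.inl h
    · rcases eq_or_ne k ⟨0, hn⟩ with rfl | hk'
      exacts [Or.inr (Or.inl hk), Or.inr (Or.inr ⟨k, hk', hk⟩)]
  rw [concatFun]
  split_ifs with hhalf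
  · refine hf _ (update_mem_Icc hq _ ⟨by linarith, by linarith⟩) (hcollar _ ?_)
    rcases hseam with ⟨h₁, -⟩ | h₁ | h₁
    · exact Or.inr (Or.inl (by linarith))
    · exact h₁.elim (fun h₁ => Or.inl (by linarith)) fun h₁ => Or.inr (Or.inl (by linarith))
    · exact Or.inr (Or.inr h₁)
  · refine hg _ (update_mem_Icc hq _ ⟨by linarith, by linarith⟩) (hcollar _ ?_)
    rcases hseam with ⟨-, h₁⟩ | h₁ | h₁
    · exact Or.inl (by linarith)
    · exact h₁.elim (fun h₁ => Or.inl (by linarith)) fun h₁ => Or.inr (Or.inl (by linarith))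
    · exact Or.inr (Or.inr h₁)

theorem concatFun_clamp (hn : 0 < n) {f g : (Fin n → ℝ) → X} (hf : CollarConst η x₀ f)
    (hg : CollarConst η x₀ g) (hε : 0 < ε) (hε₂ : ε ≤ 1/4) (hη : 2 * ε < η)
    {q : Fin n → ℝ} (hq : q ∈ Icc 0 1) :
    concatFun hn f g (fun k => clamp ε (q k)) = concatFun hn f g q := by
  by_cases hall : ∀ k, ε ≤ q k ∧ q k ≤ 1 - ε
  · congr 1
    exact funext fun k => clamp_eq_self hε (hall k).1 (hall k).2
  push Not at hall
  obtain ⟨k, hk⟩ := hall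
  have hseam : NearCubeSeam ⟨0, hn⟩ ε q :=
    Or.inr ⟨k, (le_or_gt ε (q k)).elim (fun h => Or.inr (hk h).le) fun h => Or.inl h.le⟩
  rw [concatFun_eq_of_nearCubeSeam hn hf hg hε.le hη (clamp_mem_cube hε (by linarith) q)
      (hseam.clamp hε le_rfl (by linarith)),
    concatFun_eq_of_nearCubeSeam hn hf hg hε.le hη hq hseam]

theorem concatFun_update_add_half (hn : 0 < n) (f g : (Fin n → ℝ) → X) {t : Fin n → ℝ}
    (h₀ : 0 < t ⟨0, hn⟩) (h : t ⟨0, hn⟩ ≤ 1/2) :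
    concatFun hn f g (update t ⟨0, hn⟩ (t ⟨0, hn⟩ + 1/2)) = concatFun hn g f t := by
  simp only [concatFun, update_self, update_idem]
  rw [if_neg (by linarith), if_pos h]
  ring_nf

theorem concatFun_update_sub_half (hn : 0 < n) (f g : (Fin n → ℝ) → X) {t : Fin n → ℝ}
    (h : 1/2 < t ⟨0, hn⟩) (h₁ : t ⟨0, hn⟩ ≤ 1) :
    concatFun hn f g (update t ⟨0, hn⟩ (t ⟨0, hn⟩ - 1/2)) = concatFun hn g f t := by
  simp only [concatFun, update_self, update_idem]
  rw [if_pos (by linarith), if_neg (by linarith)]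
  ring_nf

end Cube

section Reparam

variable {n : ℕ} {ε s : ℝ} {i j : Fin n} {t : Fin n → ℝ}

theorem contDiff_swapFst {F : Type*} [NormedAddCommGroup F] [NormedSpace ℝ F] {s u v : F → ℝ}
    (hs : ContDiff ℝ ∞ s) (hu : ContDiff ℝ ∞ u) (hv : ContDiff ℝ ∞ v) :
    ContDiff ℝ ∞ fun x => swapFst ε (s x) (u x) (v x) := by
  unfold swapFst lift phase rowSign bump capTop side
  simp only [div_eq_mul_inv]
  fun_prop

theorem contDiff_swapSnd {F : Type*} [NormedAddCommGroup F] [NormedSpace ℝ F] {s u v : F → ℝ}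
    (hs : ContDiff ℝ ∞ s) (hu : ContDiff ℝ ∞ u) (hv : ContDiff ℝ ∞ v) :
    ContDiff ℝ ∞ fun x => swapSnd ε (s x) (u x) (v x) := by
  unfold swapSnd swapFst squeeze clamp lift phase rowSign bump capTop side
  simp only [div_eq_mul_inv]
  fun_prop

def planarSwap (ε : ℝ) (i j : Fin n) (s : ℝ) (t : Fin n → ℝ) : Fin n → ℝ :=
  update (update t i (swapFst ε s (t i) (t j))) j (swapSnd ε s (t i) (t j))

def swapReparam (ε : ℝ) (i j : Fin n) (p : ℝ × (Fin n → ℝ)) : Fin n → ℝ :=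
  fun k => clamp ε (planarSwap ε i j p.1 p.2 k)

theorem planarSwap_apply_fst (hij : i ≠ j) :
    planarSwap ε i j s t i = swapFst ε s (t i) (t j) := by
  simp [planarSwap, hij]

theorem planarSwap_apply_snd : planarSwap ε i j s t j = swapSnd ε s (t i) (t j) := by
  simp [planarSwap]

theorem planarSwap_apply_of_ne {k : Fin n} (hi : k ≠ i) (hj : k ≠ j) :
    planarSwap ε i j s t k = t k := by
  simp [planarSwap, hi, hj]

theorem planarSwap_of_le (hs : s ≤ 1/8) : planarSwap ε i j s t = t := by
  simp [planarSwap, (swap_eq_self_of_le hs).1, (swap_eq_self_of_le hs).2]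

theorem planarSwap_eq_update (hij : i ≠ j) {x : ℝ} (hfst : swapFst ε s (t i) (t j) = x)
    (hsnd : swapSnd ε s (t i) (t j) = t j) : planarSwap ε i j s t = update t i x := by
  rw [planarSwap, hfst, hsnd, update_eq_self_iff, update_of_ne hij.symm]

theorem nearCubeSeam_planarSwap (hε : 0 < ε) (hε₁ : ε ≤ 1/16) (hij : i ≠ j)
    (hcollar : ∃ k, t k < ε/2 ∨ 1 - ε/2 < t k) :
    NearCubeSeam i (2 * ε) (planarSwap ε i j s t) := by
  obtain ⟨k, hk⟩ := hcollar
  have hk' : NearEdge (ε/2) (t k) := hk.imp le_of_lt le_of_lt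
  rcases eq_or_ne k i with rfl | hki
  · refine Or.inr ⟨k, ?_⟩
    rw [planarSwap_apply_fst hij, swapFst_of_nearEdge hε hk']
    exact hk'.mono (by linarith)
  rcases eq_or_ne k j with rfl | hkj
  · refine NearSeam.nearCubeSeam (j := k) ?_
    rw [planarSwap_apply_fst hij, planarSwap_apply_snd]
    exact hk'.elim (nearSeam_swap_of_snd_le hε hε₁) (nearSeam_swap_of_snd_ge hε hε₁)
  · refine Or.inr ⟨k, ?_⟩
    rw [planarSwap_apply_of_ne hki hkj]
    exact hk'.mono (by linarith)

theorem contDiff_swapReparam : ContDiff ℝ ∞ (swapReparam (n := n) ε i j) := by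
  have hcoord (l : Fin n) : ContDiff ℝ ∞ fun p : ℝ × (Fin n → ℝ) => p.2 l :=
    (contDiff_apply ℝ ℝ l).comp contDiff_snd
  refine contDiff_pi.2 fun k => contDiff_clamp ?_
  simp only [planarSwap, update_apply]
  rcases eq_or_ne k j with rfl | hkj
  · simpa only [if_true] using contDiff_swapSnd contDiff_fst (hcoord i) (hcoord k)
  rcases eq_or_ne k i with rfl | hki
  · simpa only [hkj, if_true, if_false] using contDiff_swapFst contDiff_fst (hcoord k) (hcoord j)
  · simpa only [hkj, hki, if_false] using hcoord k

end Reparam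

section Concat

variable {X : Type*} {n : ℕ} {x₀ : X} {ε η s : ℝ} {j : Fin n} {t : Fin n → ℝ}
  {f g : (Fin n → ℝ) → X}

theorem concatFun_swapReparam_of_collar (hn : 0 < n) (hf : CollarConst η x₀ f)
    (hg : CollarConst η x₀ g) (hε : 0 < ε) (hε₁ : ε ≤ 1/16) (hη : 4 * ε < η)
    (hj : ⟨0, hn⟩ ≠ j) (hcollar : ∃ k, t k < ε/2 ∨ 1 - ε/2 < t k) :
    concatFun hn f g (swapReparam ε ⟨0, hn⟩ j (s, t)) = x₀ :=
  concatFun_eq_of_nearCubeSeam hn hf hg (by positivity) (by linarith)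
    (clamp_mem_cube hε (by linarith) _)
    ((nearCubeSeam_planarSwap hε hε₁ hj hcollar).clamp hε (by linarith) (by linarith))

theorem concatFun_swapReparam_of_le (hn : 0 < n) (hf : CollarConst η x₀ f)
    (hg : CollarConst η x₀ g) (hε : 0 < ε) (hε₁ : ε ≤ 1/4) (hη : 2 * ε < η) (hs : s ≤ 1/8)
    (ht : t ∈ Icc 0 1) :
    concatFun hn f g (swapReparam ε ⟨0, hn⟩ j (s, t)) = concatFun hn f g t := by
  unfold swapReparam
  rw [planarSwap_of_le hs]
  exact concatFun_clamp hn hf hg hε hε₁ hη ht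

theorem concatFun_swapReparam_of_ge (hn : 0 < n) (hf : CollarConst η x₀ f)
    (hg : CollarConst η x₀ g) (hε : 0 < ε) (hε₁ : ε ≤ 1/16) (hη : 4 * ε < η)
    (hj : ⟨0, hn⟩ ≠ j) (hs : 3/4 ≤ s) (ht : t ∈ Icc 0 1) :
    concatFun hn f g (swapReparam ε ⟨0, hn⟩ j (s, t)) = concatFun hn g f t := by
  have ht₁ : t ⟨0, hn⟩ ≤ 1 := ht.2 _
  unfold swapReparam
  rcases isHalfSwap_swap (u := t ⟨0, hn⟩) hε hε₁ hs (ht.1 j) with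
    ⟨h₀, h₁, hfst, hsnd⟩ | ⟨h₀, hfst, hsnd⟩ | ⟨hseam, hseam'⟩
  · rw [planarSwap_eq_update hj hfst hsnd,
      concatFun_clamp hn hf hg hε (by linarith) (by linarith)
        (update_mem_Icc ht _ ⟨by linarith, by linarith⟩),
      concatFun_update_add_half hn f g h₀ h₁]
  · rw [planarSwap_eq_update hj hfst hsnd,
      concatFun_clamp hn hf hg hε (by linarith) (by linarith)
        (update_mem_Icc ht _ ⟨by linarith, by linarith⟩),
      concatFun_update_sub_half hn f g h₀ ht₁]
  · rw [← planarSwap_apply_fst hj, ← planarSwap_apply_snd (i := ⟨0, hn⟩)] at hseam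
    rw [concatFun_eq_of_nearCubeSeam hn hf hg (by positivity) (by linarith)
        (clamp_mem_cube hε (by linarith) _)
        (hseam.nearCubeSeam.clamp hε (by linarith) (by linarith)),
      concatFun_eq_of_nearCubeSeam hn hg hf (by positivity) (by linarith) ht hseam'.nearCubeSeam]

end Concat

end EckmannHilton

open EckmannHilton Set
open scoped ContDiff

theorem rank_le_of_fin_fun {n : ℕ} {W : Type*} [AddCommGroup W] [Module ℝ W]
    (f : (Fin n → ℝ) →ₗ[ℝ] W) : LinearMap.rank f ≤ n := by
  simpa [rank_fin_fun] using lift_rank_range_le f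

theorem ThinHomotopic.of_reparam {E HM : Type*} [NormedAddCommGroup E] [NormedSpace ℝ E]
    [TopologicalSpace HM] {IM : ModelWithCorners ℝ E HM}
    {X : Type*} [TopologicalSpace X] [ChartedSpace HM X] {n : ℕ} {x₀ : X}
    {ℓ₁ ℓ₂ : SmoothNLoop IM X n x₀} (F : SmoothNLoop IM X n x₀)
    {M : ℝ × (Fin n → ℝ) → Fin n → ℝ} (hM : ContDiff ℝ ∞ M) (hMcube : ∀ p, M p ∈ Icc 0 1)
    {ε : ℝ} (hε : 0 < ε)
    (hcollar : ∀ s ∈ Icc (0 : ℝ) 1, ∀ t ∈ Icc (0 : Fin n → ℝ) 1,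
        (∃ i, t i < ε ∨ 1 - ε < t i) → F.toFun (M (s, t)) = x₀)
    (hstart : ∀ s ∈ Icc (0 : ℝ) 1, ∀ t ∈ Icc (0 : Fin n → ℝ) 1,
        s < ε → F.toFun (M (s, t)) = ℓ₁.toFun t)
    (hend : ∀ s ∈ Icc (0 : ℝ) 1, ∀ t ∈ Icc (0 : Fin n → ℝ) 1,
        1 - ε < s → F.toFun (M (s, t)) = ℓ₂.toFun t) :
    ThinHomotopic ℓ₁ ℓ₂ := by
  obtain ⟨U, hUo, hUc, hUs⟩ := F.smooth
  refine ⟨F.toFun ∘ M, ε, hε, ⟨univ, isOpen_univ, subset_univ _, ?_⟩, hcollar, hstart, hend,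
    fun p _ => ?_⟩
  · exact hUs.comp (contMDiff_iff_contDiff.2 hM).contMDiffOn fun p _ => hUc (hMcube p)
  have hMd : MDifferentiableAt 𝓘(ℝ, ℝ × (Fin n → ℝ)) 𝓘(ℝ, Fin n → ℝ) M p :=
    (contMDiff_iff_contDiff.2 hM).mdifferentiableAt (by simp)
  have hFd : MDifferentiableAt 𝓘(ℝ, Fin n → ℝ) IM F.toFun (M p) :=
    (hUs.contMDiffAt (hUo.mem_nhds (hUc (hMcube p)))).mdifferentiableAt (by simp)
  rw [mfderiv_comp p hFd hMd, ContinuousLinearMap.toLinearMap_comp]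
  exact (LinearMap.rank_comp_le_left _ _).trans (rank_le_of_fin_fun _)

theorem pinn_comm_general {E HM : Type*} [NormedAddCommGroup E] [NormedSpace ℝ E]
    [TopologicalSpace HM] (IM : ModelWithCorners ℝ E HM)
    (X : Type*) [TopologicalSpace X] [ChartedSpace HM X]
    (n : ℕ) (hn : 0 < n) (hn2 : 2 ≤ n) (x₀ : X) :
    ∀ a b ab ba : SmoothNLoop IM X n x₀,
      (∀ t ∈ Cube n, ab.toFun t = concatFun hn a.toFun b.toFun t) →
      (∀ t ∈ Cube n, ba.toFun t = concatFun hn b.toFun a.toFun t) →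
      ThinHomotopic ab ba := by
  intro a b ab ba hab hba
  obtain ⟨εa, hεa, ha⟩ := a.based
  obtain ⟨εb, hεb, hb⟩ := b.based
  have ha' : CollarConst (min εa εb) x₀ a.toFun := CollarConst.mono ha (min_le_left _ _)
  have hb' : CollarConst (min εa εb) x₀ b.toFun := CollarConst.mono hb (min_le_right _ _)
  obtain ⟨ε, hε, hε₁, hεη⟩ : ∃ ε : ℝ, 0 < ε ∧ ε ≤ 1/16 ∧ 4 * ε < min εa εb :=
    ⟨min (min εa εb) 1 / 16, by positivity, by linarith [min_le_right (min εa εb) 1],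
      by linarith [min_le_left (min εa εb) 1, lt_min (lt_min hεa hεb) one_pos]⟩
  have hj : (⟨0, hn⟩ : Fin n) ≠ ⟨1, hn2⟩ := by simp
  have hmem (s : ℝ) (t : Fin n → ℝ) : swapReparam ε ⟨0, hn⟩ ⟨1, hn2⟩ (s, t) ∈ Cube n :=
    clamp_mem_cube hε (by linarith) _
  refine ThinHomotopic.of_reparam ab (M := swapReparam ε ⟨0, hn⟩ ⟨1, hn2⟩) contDiff_swapReparam
    (fun p => hmem p.1 p.2) (half_pos hε) (fun s _ t _ hcollar => ?_) (fun s _ t ht hs => ?_)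
    fun s _ t ht hs => ?_
  · rw [hab _ (hmem s t)]
    exact concatFun_swapReparam_of_collar hn ha' hb' hε hε₁ hεη hj hcollar
  · rw [hab _ (hmem s t), hab t ht]
    exact concatFun_swapReparam_of_le hn ha' hb' hε (by linarith) (by linarith) (by linarith) ht
  · rw [hab _ (hmem s t), hba t ht]
    exact concatFun_swapReparam_of_ge hn ha' hb' hε hε₁ hεη hj (by linarith) ht

/-- For `n ≥ 2` and any two smooth `n`-loops `a, b`, the concatenations
`a ⋆ b` and `b ⋆ a` are rank-`n` homotopic; hence `π_n^n(X,x₀)` is abelian. -/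
theorem pinn_comm {E HM : Type*} [NormedAddCommGroup E] [NormedSpace ℝ E]
    [TopologicalSpace HM] (IM : ModelWithCorners ℝ E HM)
    (X : Type*) [TopologicalSpace X] [ChartedSpace HM X] [IsManifold IM (⊤ : ℕ∞) X]
    (n : ℕ) (hn : 0 < n) (hn2 : 2 ≤ n) (x₀ : X) :
    ∀ a b ab ba : SmoothNLoop IM X n x₀,
      (∀ t ∈ Cube n, ab.toFun t = concatFun hn a.toFun b.toFun t) →
      (∀ t ∈ Cube n, ba.toFun t = concatFun hn b.toFun a.toFun t) →
      ThinHomotopic ab ba :=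
  pinn_comm_general IM X n hn hn2 x₀

end
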